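/- arXiv:1905.11776 — 3 statements merged into one kernel-verified Lean document; each statement's English description precedes it below -/
import Mathlib

section
/- Let ν be a norm integral h-invariant vector measure on a compact group G with values in a Banach space X, where h : G → G is a homeomorphism. Then for every x' in the dual space X' there exists x'_h in X' with ‖x'_h‖ ≤ ‖x'‖ such that ⟨ν_h, x'⟩(A) = ⟨ν, x'_h⟩(A) for all Borel sets A, where ν_h(A) := ν(h(A)). -/
open MeasureTheory Filter Topology
open scoped ENNReal NNReal

noncomputable section

variable {G : Type*} [Group G] [TopologicalSpace G] [IsTopologicalGroup G]
  [CompactSpace G] [MeasurableSpace G] [BorelSpace G]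
variable {X : Type*} [NormedAddCommGroup X] [NormedSpace ℂ X] [CompleteSpace X]

/-- The integral `∫_G φ dν` of a simple function `φ` against a vector measure `ν`. -/
def simpleIntegral (ν : VectorMeasure G X) (φ : SimpleFunc G ℂ) : X :=
  ∑ c ∈ φ.range, c • ν (⇑φ ⁻¹' {c})

/-- `ν` is norm integral `h`-invariant: `‖∫ φ∘h⁻¹ dν‖ = ‖∫ φ dν‖` for all simple `φ`. -/
def NormIntegralInvariant (ν : VectorMeasure G X) (h : G ≃ₜ G) : Prop :=
  ∀ φ : SimpleFunc G ℂ,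
    ‖simpleIntegral ν (φ.comp ⇑h.symm h.symm.continuous.measurable)‖ = ‖simpleIntegral ν φ‖

/-- `ν` is norm integral translation invariant: for every `s ∈ G`,
`‖∫ τ_s φ dν‖ = ‖∫ φ dν‖` for all simple `φ`, where `τ_s φ (t) = φ (s⁻¹ t)`. -/
def NormIntegralTranslationInvariant (ν : VectorMeasure G X) : Prop :=
  ∀ s : G, ∀ φ : SimpleFunc G ℂ,
    ‖simpleIntegral ν (φ.comp (fun t => s⁻¹ * t)
      ((continuous_const.mul continuous_id).measurable))‖ = ‖simpleIntegral ν φ‖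

/-- The scalar set function `⟨ν, x'⟩ : A ↦ x'(ν A)`. -/
def pairVM (ν : VectorMeasure G X) (x' : X →L[ℂ] ℂ) : Set G → ℂ :=
  fun A => x' (ν A)

/-- `m` is the total variation measure of the complex set function `μv`:
on every measurable set it equals the supremum of `∑ ‖μv (B i)‖` over finite disjoint
measurable families of subsets. -/
def IsVariationOf (μv : Set G → ℂ) (m : Measure G) : Prop :=
  ∀ A : Set G, MeasurableSet A →
    m A = ⨆ (n : ℕ) (B : Fin n → Set G)
      (_ : ∀ i, MeasurableSet (B i) ∧ B i ⊆ A)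
      (_ : Pairwise (Function.onFun Disjoint B)),
        ∑ i, (‖μv (B i)‖₊ : ℝ≥0∞)

/-- `Φ` is a Young function. -/
def IsYoung (Φ : ℝ → ℝ) : Prop :=
  StrictMonoOn Φ (Set.Ici 0) ∧ ConvexOn ℝ (Set.Ici 0) Φ ∧ ContinuousOn Φ (Set.Ici 0) ∧
    (∀ t, 0 ≤ t → (Φ t = 0 ↔ t = 0)) ∧ Tendsto Φ atTop atTop

/-- The complementary Young function `Ψ(t) = sup {ts - Φ(s) : s ≥ 0}`. -/
def youngConjugate (Φ : ℝ → ℝ) : ℝ → ℝ :=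
  fun t => sSup {y | ∃ s : ℝ, 0 ≤ s ∧ y = t * s - Φ s}

/-- The Luxemburg norm of `f` with respect to the measure `m` and Young function `Φ`,
as an extended real number. -/
def luxNorm (Φ : ℝ → ℝ) (m : Measure G) (f : G → ℂ) : ℝ≥0∞ :=
  sInf {k : ℝ≥0∞ | ∃ r : ℝ, 0 < r ∧ k = ENNReal.ofReal r ∧
    ∫⁻ t, ENNReal.ofReal (Φ (‖f t‖ / r)) ∂m ≤ 1}

/-- The weak Orlicz norm `‖f‖_{ν,Φ} = sup_{‖x'‖ ≤ 1} ‖f‖_{L^Φ(|⟨ν,x'⟩|)}`, where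
`vvar x'` is the variation measure `|⟨ν,x'⟩|`. -/
def weakNorm (vvar : (X →L[ℂ] ℂ) → Measure G) (Φ : ℝ → ℝ) (f : G → ℂ) : ℝ≥0∞ :=
  ⨆ (x' : X →L[ℂ] ℂ) (_ : ‖x'‖ ≤ 1), luxNorm Φ (vvar x') f

/-- Membership in `L^Φ(ν)`, the closure of the simple functions in the weak Orlicz norm. -/
def MemLPhi (vvar : (X →L[ℂ] ℂ) → Measure G) (Φ : ℝ → ℝ) (f : G → ℂ) : Prop :=
  Measurable f ∧ ∀ ε : ℝ≥0∞, 0 < ε →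
    ∃ φ : SimpleFunc G ℂ, weakNorm vvar Φ (fun t => f t - φ t) < ε

/-- The weak `L¹(ν)` norm `‖f‖_ν = sup_{‖x'‖ ≤ 1} ∫ |f| d|⟨ν,x'⟩|`. -/
def weakL1Norm (vvar : (X →L[ℂ] ℂ) → Measure G) (f : G → ℂ) : ℝ≥0∞ :=
  ⨆ (x' : X →L[ℂ] ℂ) (_ : ‖x'‖ ≤ 1), ∫⁻ t, ‖f t‖₊ ∂(vvar x')

/-- The semivariation `‖ν‖(G) = sup_{‖x'‖ ≤ 1} |⟨ν,x'⟩|(G)`. -/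
def semivariation (vvar : (X →L[ℂ] ℂ) → Measure G) : ℝ≥0∞ :=
  ⨆ (x' : X →L[ℂ] ℂ) (_ : ‖x'‖ ≤ 1), vvar x' Set.univ

/-- `ν` is absolutely continuous with respect to `m`: `ν(A) → 0` as `m(A) → 0`. -/
def VMAbsCont (ν : VectorMeasure G X) (m : Measure G) : Prop :=
  ∀ ε : ℝ, 0 < ε → ∃ δ : ℝ, 0 < δ ∧
    ∀ A : Set G, MeasurableSet A → m A < ENNReal.ofReal δ → ‖ν A‖ < ε

/-- Convolution with respect to the measure `m`: `(f*g)(t) = ∫ f(s) g(s⁻¹t) dm(s)`. -/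
def conv (m : Measure G) (f g : G → ℂ) : G → ℂ :=
  fun t => ∫ s, f s * g (s⁻¹ * t) ∂m


set_option linter.unusedSectionVars false in
/-- The set function `A ↦ (c ↦ c • ν A)` as a family of continuous `ℝ`-linear maps. -/
def vmT (ν : VectorMeasure G X) : Set G → (ℂ →L[ℝ] X) :=
  fun A => (ContinuousLinearMap.toSpanSingleton ℂ (ν A)).restrictScalars ℝ

lemma vmT_apply (ν : VectorMeasure G X) (A : Set G) (c : ℂ) : vmT ν A c = c • ν A := rfl

lemma simpleIntegral_eq_setTo (ν : VectorMeasure G X) (φ : SimpleFunc G ℂ) :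
    simpleIntegral ν φ = SimpleFunc.setToSimpleFunc (vmT ν) φ := rfl

lemma vmT_finMeasAdditive (ν : VectorMeasure G X) :
    FinMeasAdditive (0 : Measure G) (vmT ν) := by
  intro s t hs ht _ _ hst
  ext c
  simp [vmT_apply, ν.of_union hst hs ht, smul_add]

lemma simpleIntegral_add (ν : VectorMeasure G X) (φ ψ : SimpleFunc G ℂ) :
    simpleIntegral ν (φ + ψ) = simpleIntegral ν φ + simpleIntegral ν ψ := by
  simp only [simpleIntegral_eq_setTo]
  exact SimpleFunc.setToSimpleFunc_add _ (vmT_finMeasAdditive ν)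
    (integrable_zero_measure) (integrable_zero_measure)

lemma simpleIntegral_smul (ν : VectorMeasure G X) (c : ℂ) (φ : SimpleFunc G ℂ) :
    simpleIntegral ν (c • φ) = c • simpleIntegral ν φ := by
  simp only [simpleIntegral_eq_setTo]
  exact SimpleFunc.setToSimpleFunc_smul _ (vmT_finMeasAdditive ν)
    (fun c s x => by simp [vmT_apply, smul_smul, mul_comm]) c (integrable_zero_measure)

lemma simpleIntegral_indicator (ν : VectorMeasure G X) {A : Set G} (hA : MeasurableSet A) :
    simpleIntegral ν (SimpleFunc.piecewise A hA (SimpleFunc.const G (1:ℂ))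
      (SimpleFunc.const G 0)) = ν A := by
  rw [simpleIntegral_eq_setTo, SimpleFunc.setToSimpleFunc_indicator _ ?_ hA 1]
  · simp [vmT_apply]
  · ext c; simp [vmT_apply]

/-- `simpleIntegral` as a linear map in `φ`. -/
def simpleIntegralₗ (ν : VectorMeasure G X) : SimpleFunc G ℂ →ₗ[ℂ] X where
  toFun := simpleIntegral ν
  map_add' := simpleIntegral_add ν
  map_smul' := fun c φ => simpleIntegral_smul ν c φ

theorem exists_dual_of_normIntegralInvariant' (ν : VectorMeasure G X) (h : G ≃ₜ G)
    (hinv : ∀ φ : SimpleFunc G ℂ,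
    ‖simpleIntegral ν (φ.comp ⇑h.symm h.symm.continuous.measurable)‖ = ‖simpleIntegral ν φ‖)
    (x' : X →L[ℂ] ℂ) :
    ∃ xh : X →L[ℂ] ℂ, ‖xh‖ ≤ ‖x'‖ ∧
      ∀ A : Set G, MeasurableSet A → x' (ν (h '' A)) = xh (ν A) := by
  classical
  set L1 : SimpleFunc G ℂ →ₗ[ℂ] X := simpleIntegralₗ ν with hL1
  -- composition with h.symm is linear in φ
  set C : SimpleFunc G ℂ →ₗ[ℂ] SimpleFunc G ℂ :=
    { toFun := fun φ => φ.comp ⇑h.symm h.symm.continuous.measurable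
      map_add' := fun φ ψ => by
        ext t; simp [SimpleFunc.coe_comp]
      map_smul' := fun c φ => by
        ext t; simp [SimpleFunc.coe_comp] } with hC
  set g : SimpleFunc G ℂ →ₗ[ℂ] ℂ := (x' : X →ₗ[ℂ] ℂ).comp (L1.comp C) with hg
  have hgφ : ∀ φ, g φ = x' (simpleIntegral ν (φ.comp ⇑h.symm h.symm.continuous.measurable)) :=
    fun φ => rfl
  have hker : LinearMap.ker L1 ≤ LinearMap.ker g := by
    intro φ hφ
    have h0 : simpleIntegral ν φ = 0 := hφ
    have : ‖simpleIntegral ν (φ.comp ⇑h.symm h.symm.continuous.measurable)‖ = 0 := by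
      rw [hinv φ, h0, norm_zero]
    have h2 : simpleIntegral ν (φ.comp ⇑h.symm h.symm.continuous.measurable) = 0 :=
      norm_eq_zero.mp this
    simp only [LinearMap.mem_ker, hgφ, h2, map_zero]
  set f₀ : LinearMap.range L1 →ₗ[ℂ] ℂ :=
    (Submodule.liftQ (LinearMap.ker L1) g hker).comp
      (L1.quotKerEquivRange.symm : LinearMap.range L1 →ₗ[ℂ] _) with hf₀
  have hf₀φ : ∀ (φ : SimpleFunc G ℂ) (hm : L1 φ ∈ LinearMap.range L1),
      f₀ ⟨L1 φ, hm⟩ = g φ := by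
    intro φ hm
    simp only [hf₀, LinearMap.comp_apply, LinearEquiv.coe_coe,
      LinearMap.quotKerEquivRange_symm_apply_image, Submodule.liftQ_apply]
    rfl
  have hbound : ∀ v : LinearMap.range L1, ‖f₀ v‖ ≤ ‖x'‖ * ‖v‖ := by
    rintro ⟨v, φ, rfl⟩
    rw [hf₀φ φ (LinearMap.mem_range_self _ φ), hgφ]
    calc ‖x' (simpleIntegral ν (φ.comp ⇑h.symm h.symm.continuous.measurable))‖
        ≤ ‖x'‖ * ‖simpleIntegral ν (φ.comp ⇑h.symm h.symm.continuous.measurable)‖ :=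
          x'.le_opNorm _
      _ = ‖x'‖ * ‖simpleIntegral ν φ‖ := by rw [hinv φ]
      _ = ‖x'‖ * ‖(⟨L1 φ, LinearMap.mem_range_self _ φ⟩ : LinearMap.range L1)‖ := rfl
  set f : LinearMap.range L1 →L[ℂ] ℂ := LinearMap.mkContinuous f₀ ‖x'‖ hbound with hf
  obtain ⟨xh, hext, hnorm⟩ := exists_extension_norm_eq (LinearMap.range L1) f
  refine ⟨xh, ?_, ?_⟩
  · rw [hnorm]
    exact LinearMap.mkContinuous_norm_le f₀ (norm_nonneg x') hbound
  · intro A hA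
    set φ : SimpleFunc G ℂ :=
      SimpleFunc.piecewise A hA (SimpleFunc.const G (1:ℂ)) (SimpleFunc.const G 0) with hφdef
    have himg : h '' A = ⇑h.symm ⁻¹' A := h.image_eq_preimage_symm A
    have hAimg : MeasurableSet (h '' A) := by
      rw [himg]; exact h.symm.continuous.measurable hA
    have hcomp : φ.comp ⇑h.symm h.symm.continuous.measurable =
        SimpleFunc.piecewise (h '' A) hAimg (SimpleFunc.const G (1:ℂ)) (SimpleFunc.const G 0) := by
      ext t
      simp only [SimpleFunc.coe_comp, Function.comp_apply, hφdef, SimpleFunc.coe_piecewise,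
        SimpleFunc.coe_const, himg]
      by_cases ht : h.symm t ∈ A <;> simp [Set.piecewise, ht]
    have hInt : simpleIntegral ν φ = ν A := simpleIntegral_indicator ν hA
    have hInt2 : simpleIntegral ν (φ.comp ⇑h.symm h.symm.continuous.measurable) = ν (h '' A) := by
      rw [hcomp]; exact simpleIntegral_indicator ν hAimg
    have hmem : ν A ∈ LinearMap.range L1 := ⟨φ, hInt⟩
    have : xh (ν A) = f₀ ⟨ν A, hmem⟩ := hext ⟨ν A, hmem⟩
    rw [this]
    have : (⟨ν A, hmem⟩ : LinearMap.range L1) = ⟨L1 φ, LinearMap.mem_range_self _ φ⟩ := by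
      ext; exact hInt.symm
    rw [this, hf₀φ φ (LinearMap.mem_range_self _ φ), hgφ, hInt2]


/-- For a norm integral `h`-invariant `ν` and `x' ∈ X'` there is `x'_h ∈ X'` with
`‖x'_h‖ ≤ ‖x'‖` and `⟨ν_h, x'⟩(A) = ⟨ν, x'_h⟩(A)` for all Borel `A`, where `ν_h(A) = ν(h(A))`. -/
theorem exists_dual_of_normIntegralInvariant (ν : VectorMeasure G X) (h : G ≃ₜ G)
    (hinv : NormIntegralInvariant ν h) (x' : X →L[ℂ] ℂ) :
    ∃ xh : X →L[ℂ] ℂ, ‖xh‖ ≤ ‖x'‖ ∧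
      ∀ A : Set G, MeasurableSet A → x' (ν (h '' A)) = xh (ν A) :=
  exists_dual_of_normIntegralInvariant' ν h hinv x'

end
end

section
/- Let ν be a norm integral h-invariant vector measure on a compact group G, h a homeomorphism of G, and Φ a Young function. Then for every f in the weak Orlicz space L^Φ_w(ν), the function f_h = f∘h⁻¹ also belongs to L^Φ_w(ν) and ‖f_h‖_{ν,Φ} = ‖f‖_{ν,Φ}. -/
open MeasureTheory Filter Topology
open scoped ENNReal NNReal

noncomputable section

variable {G : Type*} [Group G] [TopologicalSpace G] [IsTopologicalGroup G]
  [CompactSpace G] [MeasurableSpace G] [BorelSpace G]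
variable {X : Type*} [NormedAddCommGroup X] [NormedSpace ℂ X] [CompleteSpace X]

set_option linter.unusedSectionVars false
set_option maxHeartbeats 1000000


-- finite additivity of a vector measure over a Finset-indexed disjoint family
theorem vm_finset_sum (ν : VectorMeasure G X) {ι : Type*} (s : Finset ι) (E : ι → Set G)
    (hE : ∀ j ∈ s, MeasurableSet (E j))
    (hd : ∀ j ∈ s, ∀ k ∈ s, j ≠ k → Disjoint (E j) (E k)) :
    ν (⋃ j ∈ s, E j) = ∑ j ∈ s, ν (E j) := by
  classical
  induction s using Finset.induction_on with
  | empty => simp [ν.empty]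
  | @insert a s' hj ih =>
    rw [Finset.set_biUnion_insert, Finset.sum_insert hj,
      VectorMeasure.of_union ?hdisj (hE a (Finset.mem_insert_self a s')) ?hmeas,
      ih (fun j hjm => hE j (Finset.mem_insert_of_mem hjm))
        (fun j hjm k hkm hne => hd j (Finset.mem_insert_of_mem hjm) k (Finset.mem_insert_of_mem hkm) hne)]
    case hdisj =>
      refine Set.disjoint_iUnion₂_right.mpr fun j hjm => ?_
      exact hd a (Finset.mem_insert_self a s') j (Finset.mem_insert_of_mem hjm)
        (fun hh => hj (hh ▸ hjm))
    case hmeas =>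
      exact MeasurableSet.biUnion s'.countable_toSet
        (fun j hjm => hE j (Finset.mem_insert_of_mem hjm))

set_option linter.unusedSectionVars false

theorem sf_sum_apply {ι : Type*} (s : Finset ι) (F : ι → SimpleFunc G ℂ) (t : G) :
    (∑ j ∈ s, F j) t = ∑ j ∈ s, F j t := by
  classical
  induction s using Finset.induction_on with
  | empty => simp
  | @insert a s' ha ih => simp [Finset.sum_insert ha, ih]

theorem simpleIntegral_indSum (ν : VectorMeasure G X) {ι : Type*} (s : Finset ι)
    (E : ι → Set G) (hE : ∀ j ∈ s, MeasurableSet (E j))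
    (hd : ∀ j ∈ s, ∀ k ∈ s, j ≠ k → Disjoint (E j) (E k)) (d : ι → ℂ) :
    simpleIntegral ν (∑ j ∈ s, (SimpleFunc.const G (d j)).restrict (E j))
      = ∑ j ∈ s, d j • ν (E j) := by
  classical
  set φ : SimpleFunc G ℂ := ∑ j ∈ s, (SimpleFunc.const G (d j)).restrict (E j) with hφ
  have happly : ∀ t, φ t = ∑ j ∈ s, (E j).indicator (fun _ => d j) t := by
    intro t
    rw [hφ, sf_sum_apply]
    refine Finset.sum_congr rfl fun j hj => ?_
    rw [SimpleFunc.restrict_apply _ (hE j hj)]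
    rfl
  have hval : ∀ j ∈ s, ∀ t ∈ E j, φ t = d j := by
    intro j hj t ht
    rw [happly]
    rw [Finset.sum_eq_single j]
    · simp [Set.indicator_of_mem ht]
    · intro k hk hkj
      have : t ∉ E k := fun htk => (hd k hk j hj hkj).ne_of_mem htk ht rfl
      simp [Set.indicator_of_notMem this]
    · exact fun h => absurd hj h
  have h0 : ∀ t, t ∉ (⋃ j ∈ s, E j) → φ t = 0 := by
    intro t ht
    rw [happly]
    refine Finset.sum_eq_zero fun j hj => ?_
    have : t ∉ E j := fun htj => ht (Set.mem_biUnion hj htj)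
    simp [Set.indicator_of_notMem this]
  have hfiber : ∀ c : ℂ, c ≠ 0 →
      ⇑φ ⁻¹' {c} = ⋃ j ∈ s.filter (fun j => d j = c), E j := by
    intro c hc
    ext t
    simp only [Set.mem_preimage, Set.mem_singleton_iff, Set.mem_iUnion, Finset.mem_filter,
      exists_prop]
    constructor
    · intro hφt
      by_cases htU : t ∈ ⋃ j ∈ s, E j
      · rcases Set.mem_iUnion₂.mp htU with ⟨j, hj, htj⟩
        exact ⟨j, ⟨hj, (hval j hj t htj) ▸ hφt.symm ▸ rfl⟩, htj⟩
      · exact absurd (h0 t htU) (hφt ▸ hc)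
    · rintro ⟨j, ⟨hj, hdj⟩, htj⟩
      rw [hval j hj t htj, hdj]
  -- main computation
  rw [simpleIntegral]
  rw [← Finset.sum_erase (f := fun c => c • (ν (⇑φ ⁻¹' {c}) : X)) (a := (0:ℂ)) φ.range (by simp)]
  have step : ∀ c ∈ φ.range.erase 0,
      c • ν (⇑φ ⁻¹' {c}) = ∑ j ∈ s.filter (fun j => d j = c), d j • ν (E j) := by
    intro c hc
    have hcne : c ≠ 0 := Finset.ne_of_mem_erase hc
    rw [hfiber c hcne,
      vm_finset_sum ν _ E (fun j hj => hE j (Finset.mem_of_mem_filter j hj))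
        (fun j hj k hk hne => hd j (Finset.mem_of_mem_filter j hj) k
          (Finset.mem_of_mem_filter k hk) hne),
      Finset.smul_sum]
    exact Finset.sum_congr rfl fun j hj => by rw [(Finset.mem_filter.mp hj).2]
  rw [Finset.sum_congr rfl step]
  set R₀ := φ.range.erase 0 with hR₀
  have hfilter_eq : ∀ c ∈ R₀,
      s.filter (fun j => d j = c) = (s.filter (fun j => d j ∈ R₀)).filter (fun j => d j = c) := by
    intro c hc
    rw [Finset.filter_filter]
    exact Finset.filter_congr (fun j hj => by
      constructor
      · intro hdc; exact ⟨hdc ▸ hc, hdc⟩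
      · exact fun hh => hh.2)
  rw [Finset.sum_congr rfl (fun c hc => by rw [hfilter_eq c hc])]
  rw [Finset.sum_fiberwise_of_maps_to (fun j hj => (Finset.mem_filter.mp hj).2)]
  refine Finset.sum_subset (Finset.filter_subset _ s) fun j hj hjn => ?_
  have hnot : ¬ d j ∈ R₀ := fun hmem => hjn (Finset.mem_filter.mpr ⟨hj, hmem⟩)
  rw [hR₀, Finset.mem_erase] at hnot
  push_neg at hnot
  by_cases hdj : d j = 0
  · rw [hdj, zero_smul]
  · have hnr : d j ∉ φ.range := hnot hdj
    have hEempty : E j = ∅ := by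
      by_contra hne
      rcases Set.nonempty_iff_ne_empty.mpr hne with ⟨t, ht⟩
      exact hnr (by
        rw [SimpleFunc.mem_range]
        exact ⟨t, (hval j hj t ht)⟩)
    rw [hEempty, ν.empty, smul_zero]

def wSup (vvar : (X →L[ℂ] ℂ) → Measure G) (g : G → ℝ≥0∞) : ℝ≥0∞ :=
  ⨆ (x' : X →L[ℂ] ℂ) (_ : ‖x'‖ ≤ 1), ∫⁻ t, g t ∂(vvar x')

def tSup (ν : VectorMeasure G X) (g : G → ℝ≥0∞) : ℝ≥0∞ :=
  ⨆ (φ : SimpleFunc G ℂ) (_ : ∀ t, (‖φ t‖₊ : ℝ≥0∞) ≤ g t), (‖simpleIntegral ν φ‖₊ : ℝ≥0∞)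



theorem norm_pair_le (ν : VectorMeasure G X) (x' : X →L[ℂ] ℂ) {m : Measure G}
    (hvar : IsVariationOf (pairVM ν x') m) {B : Set G} (hB : MeasurableSet B) :
    (‖x' (ν B)‖₊ : ℝ≥0∞) ≤ m B := by
  rw [hvar B hB]
  have h1 : (‖x' (ν B)‖₊ : ℝ≥0∞)
      = ∑ _i : Fin 1, (‖pairVM ν x' ((fun _ => B) _i)‖₊ : ℝ≥0∞) := by
    simp [pairVM]
  rw [h1]
  exact le_iSup_of_le 1 (le_iSup_of_le (fun _ => B)
    (le_iSup_of_le (fun _ => ⟨hB, le_rfl⟩)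
      (le_iSup_of_le (fun i j hij => absurd (Subsingleton.elim i j) hij) le_rfl)))

theorem tSup_le_wSup (ν : VectorMeasure G X) (vvar : (X →L[ℂ] ℂ) → Measure G)
    (hvar : ∀ x', IsVariationOf (pairVM ν x') (vvar x')) (g : G → ℝ≥0∞) :
    tSup ν g ≤ wSup vvar g := by
  refine iSup₂_le fun φ hφ => ?_
  obtain ⟨x', hx1, hx⟩ := exists_dual_vector'' ℂ (simpleIntegral ν φ)
  have key : (‖simpleIntegral ν φ‖₊ : ℝ≥0∞) ≤ ∫⁻ t, g t ∂(vvar x') := by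
    have e1 : (‖simpleIntegral ν φ‖₊ : ℝ≥0∞) = (‖x' (simpleIntegral ν φ)‖₊ : ℝ≥0∞) := by
      rw [hx]
      norm_cast
      simp [nnnorm]
    rw [e1]
    have e2 : x' (simpleIntegral ν φ) = ∑ c ∈ φ.range, c * x' (ν (⇑φ ⁻¹' {c})) := by
      rw [simpleIntegral, map_sum]
      exact Finset.sum_congr rfl fun c _ => by rw [_root_.map_smul, smul_eq_mul]
    rw [e2]
    calc (‖∑ c ∈ φ.range, c * x' (ν (⇑φ ⁻¹' {c}))‖₊ : ℝ≥0∞)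
        ≤ ∑ c ∈ φ.range, (‖c * x' (ν (⇑φ ⁻¹' {c}))‖₊ : ℝ≥0∞) := by
          norm_cast
          exact nnnorm_sum_le _ _
      _ = ∑ c ∈ φ.range, (‖c‖₊ : ℝ≥0∞) * (‖x' (ν (⇑φ ⁻¹' {c}))‖₊ : ℝ≥0∞) := by
          norm_cast
          exact Finset.sum_congr rfl fun c _ => nnnorm_mul _ _
      _ ≤ ∑ c ∈ φ.range, (‖c‖₊ : ℝ≥0∞) * vvar x' (⇑φ ⁻¹' {c}) := by
          refine Finset.sum_le_sum fun c _ => ?_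
          exact mul_le_mul_right (norm_pair_le ν x' (hvar x') (φ.measurableSet_fiber c)) _
      _ = (φ.map (fun c => (‖c‖₊ : ℝ≥0∞))).lintegral (vvar x') := by
          rw [SimpleFunc.map_lintegral]
      _ = ∫⁻ t, (‖φ t‖₊ : ℝ≥0∞) ∂(vvar x') := by
          rw [← SimpleFunc.lintegral_eq_lintegral]
          refine lintegral_congr fun t => by rw [SimpleFunc.map_apply]
      _ ≤ ∫⁻ t, g t ∂(vvar x') := lintegral_mono hφ
  exact le_trans key (le_iSup₂_of_le x' hx1 le_rfl)

/-- Values reachable as `r * ∑ ‖x'(ν Bᵢ)‖` with `r ≤ a` and `B` a finite disjoint measurable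
family of subsets of `A`. -/
def reach (ν : VectorMeasure G X) (x' : X →L[ℂ] ℂ) (a : ℝ≥0∞) (A : Set G) : Set ℝ≥0∞ :=
  {w | ∃ r : ℝ≥0, (r : ℝ≥0∞) ≤ a ∧ ∃ (n : ℕ) (B : Fin n → Set G),
    (∀ i, MeasurableSet (B i) ∧ B i ⊆ A) ∧ Pairwise (Function.onFun Disjoint B) ∧
    w = (r : ℝ≥0∞) * ∑ i, (‖x' (ν (B i))‖₊ : ℝ≥0∞)}

theorem zero_mem_reach (ν : VectorMeasure G X) (x' : X →L[ℂ] ℂ) (a : ℝ≥0∞) (A : Set G) :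
    0 ∈ reach ν x' a A :=
  ⟨0, by simp, 0, (fun i : Fin 0 => i.elim0), (fun i : Fin 0 => i.elim0),
    (fun i : Fin 0 => i.elim0), by simp⟩

theorem reach_le (ν : VectorMeasure G X) (x' : X →L[ℂ] ℂ) {m : Measure G}
    (hvar : IsVariationOf (pairVM ν x') m) (a : ℝ≥0∞) {A : Set G} (hA : MeasurableSet A)
    {w : ℝ≥0∞} (hw : w ∈ reach ν x' a A) : w ≤ a * m A := by
  obtain ⟨r, hr, n, B, h1, h2, rfl⟩ := hw
  have hsum : ∑ i, (‖x' (ν (B i))‖₊ : ℝ≥0∞) ≤ m A := by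
    rw [hvar A hA]
    exact le_iSup_of_le n (le_iSup_of_le B (le_iSup_of_le h1 (le_iSup_of_le h2 le_rfl)))
  exact mul_le_mul' hr hsum

theorem le_sSup_reach (ν : VectorMeasure G X) (x' : X →L[ℂ] ℂ) {m : Measure G}
    (hvar : IsVariationOf (pairVM ν x') m) {a : ℝ≥0∞} {A : Set G} (hA : MeasurableSet A)
    (htop : a = ⊤ → m A = 0) : a * m A ≤ sSup (reach ν x' a A) := by
  have hv := hvar A hA
  simp only [pairVM] at hv
  rw [hv]
  simp only [ENNReal.mul_iSup]
  refine iSup_le fun n => iSup_le fun B => iSup_le fun h1 => iSup_le fun h2 => ?_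
  by_cases ha : a = ⊤
  · have hma : m A = 0 := htop ha
    have hz : ∑ i, (‖x' (ν (B i))‖₊ : ℝ≥0∞) = 0 := by
      refine le_antisymm ?_ zero_le
      rw [← hma, hv]
      exact le_iSup_of_le n (le_iSup_of_le B (le_iSup_of_le h1 (le_iSup_of_le h2 le_rfl)))
    rw [hz, mul_zero]
    exact zero_le
  · refine le_sSup ?_
    exact ⟨a.toNNReal, by rw [ENNReal.coe_toNNReal ha], n, B, h1, h2,
      by rw [ENNReal.coe_toNNReal ha]⟩

/-- From `b < ∑ sSup (u i)` choose elements `v i ∈ u i` with `b < ∑ v i`. -/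
theorem choose_lt_sum {ι : Type*} (S : Finset ι) (u : ι → Set ℝ≥0∞)
    (h0 : ∀ i ∈ S, (0:ℝ≥0∞) ∈ u i) (b : ℝ≥0∞) (hb : b < ∑ i ∈ S, sSup (u i)) :
    ∃ v : ι → ℝ≥0∞, (∀ i ∈ S, v i ∈ u i) ∧ b < ∑ i ∈ S, v i := by
  classical
  induction S using Finset.induction_on generalizing b with
  | empty => exact ⟨fun _ => 0, fun i hi => absurd hi (Finset.notMem_empty i), by simpa using hb⟩
  | @insert a S' ha ih =>
    rw [Finset.sum_insert ha] at hb
    have hne : (u a).Nonempty := ⟨0, h0 a (Finset.mem_insert_self a S')⟩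
    rw [ENNReal.sSup_add hne] at hb
    obtain ⟨x, hxu, hx⟩ : ∃ x ∈ u a, b < x + ∑ i ∈ S', sSup (u i) := by
      have := lt_iSup_iff.mp hb
      obtain ⟨x, hx⟩ := this
      rw [lt_iSup_iff] at hx
      obtain ⟨hxu, hlt⟩ := hx
      exact ⟨x, hxu, hlt⟩
    by_cases hbx : b < x
    · refine ⟨fun i => if i = a then x else 0, fun i hi => ?_, ?_⟩
      · by_cases hia : i = a
        · simpa [hia] using hxu
        · simp only [hia, if_false]
          exact h0 i hi
      · rw [Finset.sum_insert ha, if_pos rfl]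
        exact lt_of_lt_of_le hbx (le_add_of_nonneg_right zero_le)
    · push_neg at hbx
      have hxtop : x ≠ ⊤ := ne_top_of_le_ne_top hb.ne_top hbx
      have hsub : b - x < ∑ i ∈ S', sSup (u i) :=
        (ENNReal.sub_lt_iff_lt_right hxtop hbx).mpr (by rwa [add_comm] at hx)
      obtain ⟨v, hv, hvlt⟩ := ih (fun i hi => h0 i (Finset.mem_insert_of_mem hi)) (b - x) hsub
      refine ⟨fun i => if i = a then x else v i, fun i hi => ?_, ?_⟩
      · by_cases hia : i = a
        · simpa [hia] using hxu
        · simp only [hia, if_false]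
          exact hv i (by rcases Finset.mem_insert.mp hi with h | h; exact absurd h hia; exact h)
      · rw [Finset.sum_insert ha, if_pos rfl]
        have : ∑ i ∈ S', (if i = a then x else v i) = ∑ i ∈ S', v i :=
          Finset.sum_congr rfl fun i hi => if_neg (fun hh : i = a => ha (hh ▸ hi))
        rw [this]
        calc b = x + (b - x) := by rw [add_comm, tsub_add_cancel_of_le hbx]
        _ < x + ∑ i ∈ S', v i := ENNReal.add_lt_add_left hxtop hvlt

theorem indSum_apply_mem {ι : Type*} (s : Finset ι) (E : ι → Set G)
    (hE : ∀ j ∈ s, MeasurableSet (E j))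
    (hd : ∀ j ∈ s, ∀ k ∈ s, j ≠ k → Disjoint (E j) (E k)) (d : ι → ℂ)
    {j : ι} (hj : j ∈ s) {t : G} (ht : t ∈ E j) :
    (∑ j ∈ s, (SimpleFunc.const G (d j)).restrict (E j)) t = d j := by
  classical
  rw [sf_sum_apply]
  have : ∀ k ∈ s, ((SimpleFunc.const G (d k)).restrict (E k)) t
      = (E k).indicator (fun _ => d k) t := by
    intro k hk
    rw [SimpleFunc.restrict_apply _ (hE k hk)]
    rfl
  rw [Finset.sum_congr rfl this, Finset.sum_eq_single j]
  · simp [Set.indicator_of_mem ht]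
  · intro k hk hkj
    have : t ∉ E k := fun htk => (hd k hk j hj hkj).ne_of_mem htk ht rfl
    simp [Set.indicator_of_notMem this]
  · exact fun h => absurd hj h

theorem indSum_apply_not_mem {ι : Type*} (s : Finset ι) (E : ι → Set G)
    (hE : ∀ j ∈ s, MeasurableSet (E j)) (d : ι → ℂ)
    {t : G} (ht : t ∉ ⋃ j ∈ s, E j) :
    (∑ j ∈ s, (SimpleFunc.const G (d j)).restrict (E j)) t = 0 := by
  classical
  rw [sf_sum_apply]
  refine Finset.sum_eq_zero fun j hj => ?_
  rw [SimpleFunc.restrict_apply _ (hE j hj)]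
  exact Set.indicator_of_notMem (fun htj => ht (Set.mem_biUnion hj htj)) _

theorem wSup_le_tSup (ν : VectorMeasure G X) (vvar : (X →L[ℂ] ℂ) → Measure G)
    (hvar : ∀ x', IsVariationOf (pairVM ν x') (vvar x'))
    (g : G → ℝ≥0∞) (hg : ∀ t, g t ≠ ⊤) : wSup vvar g ≤ tSup ν g := by
  classical
  refine iSup₂_le fun x' hx1 => ?_
  rw [MeasureTheory.lintegral]
  refine iSup₂_le fun s hs => ?_
  set m := vvar x' with hm
  rw [SimpleFunc.lintegral]
  -- each summand equals the sup of reachable values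
  have hterm : ∀ a ∈ s.range, a * m (⇑s ⁻¹' {a}) = sSup (reach ν x' a (⇑s ⁻¹' {a})) := by
    intro a _
    have hA : MeasurableSet (⇑s ⁻¹' {a}) := s.measurableSet_fiber a
    have htop : a = ⊤ → m (⇑s ⁻¹' {a}) = 0 := by
      intro ha
      have : ⇑s ⁻¹' {a} = ∅ := by
        ext t
        simp only [Set.mem_preimage, Set.mem_singleton_iff, Set.mem_empty_iff_false, iff_false]
        intro hst
        exact hg t (top_le_iff.mp (by rw [← ha, ← hst]; exact hs t))
      rw [this, measure_empty]
    exact le_antisymm (le_sSup_reach ν x' (hvar x') hA htop)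
      (sSup_le fun w hw => reach_le ν x' (hvar x') a hA hw)
  rw [Finset.sum_congr rfl hterm]
  -- it suffices to bound every b below the sum
  have main : ∀ b : ℝ≥0∞, b < ∑ a ∈ s.range, sSup (reach ν x' a (⇑s ⁻¹' {a})) → b ≤ tSup ν g := by
    intro b hb
    obtain ⟨v, hv, hbv⟩ := choose_lt_sum s.range _
      (fun a _ => zero_mem_reach ν x' a (⇑s ⁻¹' {a})) b hb
    -- extract the data
    choose! r hr n B hBm hBd hveq using hv
    -- the coefficients
    set z : ∀ a : ℝ≥0∞, Fin (n a) → ℂ := fun a i => x' (ν (B a i)) with hz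
    set c : ∀ a : ℝ≥0∞, Fin (n a) → ℂ :=
      fun a i => if z a i = 0 then 0 else (‖z a i‖ : ℂ) / z a i with hc
    have hcz : ∀ a i, c a i * z a i = (‖z a i‖ : ℂ) := by
      intro a i
      by_cases h : z a i = 0
      · simp [hc, h]
      · simp only [hc, if_neg h]
        rw [div_mul_cancel₀ _ h]
    have hcnorm : ∀ a i, ‖c a i‖ ≤ 1 := by
      intro a i
      by_cases h : z a i = 0
      · simp [hc, h]
      · simp only [hc, if_neg h]
        rw [norm_div, Complex.norm_real, norm_norm]
        exact le_of_eq (div_self (norm_ne_zero_iff.mpr h))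
    -- the sigma index set
    set T : Finset ((a : ℝ≥0∞) × Fin (n a)) :=
      s.range.sigma (fun a => (Finset.univ : Finset (Fin (n a)))) with hT
    set E : ((a : ℝ≥0∞) × Fin (n a)) → Set G := fun p => B p.1 p.2 with hE
    set d : ((a : ℝ≥0∞) × Fin (n a)) → ℂ := fun p => (r p.1 : ℂ) * c p.1 p.2 with hd
    have hmemT : ∀ p : (a : ℝ≥0∞) × Fin (n a), p ∈ T ↔ p.1 ∈ s.range := by
      intro p
      rw [hT, Finset.mem_sigma]
      simp
    have hEm : ∀ p ∈ T, MeasurableSet (E p) := by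
      intro p hp
      exact (hBm p.1 ((hmemT p).mp hp) p.2).1
    have hEsub : ∀ p ∈ T, E p ⊆ ⇑s ⁻¹' {p.1} := by
      intro p hp
      exact (hBm p.1 ((hmemT p).mp hp) p.2).2
    have hEd : ∀ p ∈ T, ∀ q ∈ T, p ≠ q → Disjoint (E p) (E q) := by
      rintro ⟨a, i⟩ hp ⟨a', i'⟩ hq hne
      by_cases haa : a = a'
      · subst haa
        have hii : i ≠ i' := fun h => hne (by rw [h])
        exact hBd a ((hmemT ⟨a, i⟩).mp hp) hii
      · rw [Set.disjoint_left]
        intro t htp htq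
        refine absurd ?_ haa
        have h1 := hEsub ⟨a, i⟩ hp htp
        have h2 := hEsub ⟨a', i'⟩ hq htq
        rw [Set.mem_preimage, Set.mem_singleton_iff] at h1 h2
        simp only [] at h1 h2
        exact h1 ▸ h2 ▸ rfl
    -- the simple function
    set φ : SimpleFunc G ℂ := ∑ p ∈ T, (SimpleFunc.const G (d p)).restrict (E p) with hφ
    have hint : simpleIntegral ν φ = ∑ p ∈ T, d p • ν (E p) :=
      simpleIntegral_indSum ν T E hEm hEd d
    -- the pointwise bound
    have hbound : ∀ t, (‖φ t‖₊ : ℝ≥0∞) ≤ g t := by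
      intro t
      by_cases htU : t ∈ ⋃ p ∈ T, E p
      · rcases Set.mem_iUnion₂.mp htU with ⟨p, hpT, htp⟩
        rw [hφ, indSum_apply_mem T E hEm hEd d hpT htp]
        have hst : s t = p.1 := by
          have := hEsub p hpT htp
          rwa [Set.mem_preimage, Set.mem_singleton_iff] at this
        have hnd : ‖d p‖ ≤ (r p.1 : ℝ) := by
          rw [hd]
          calc ‖((r p.1 : ℝ) : ℂ) * c p.1 p.2‖ = ‖((r p.1 : ℝ) : ℂ)‖ * ‖c p.1 p.2‖ :=
                norm_mul _ _
            _ ≤ (r p.1 : ℝ) * 1 := by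
                refine mul_le_mul ?_ (hcnorm p.1 p.2) (norm_nonneg _) (r p.1).coe_nonneg
                rw [Complex.norm_real, Real.norm_eq_abs, abs_of_nonneg (r p.1).coe_nonneg]
            _ = (r p.1 : ℝ) := mul_one _
        calc (‖d p‖₊ : ℝ≥0∞) = ENNReal.ofReal ‖d p‖ := (ofReal_norm _).symm
          _ ≤ ENNReal.ofReal (r p.1 : ℝ) := ENNReal.ofReal_le_ofReal hnd
          _ = (r p.1 : ℝ≥0∞) := ENNReal.ofReal_coe_nnreal
          _ ≤ p.1 := hr p.1 ((hmemT p).mp hpT)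
          _ = s t := hst.symm
          _ ≤ g t := hs t
      · rw [hφ, indSum_apply_not_mem T E hEm d htU]
        simp
    -- the value of the pairing
    have hterm2 : ∀ p ∈ T, x' (d p • ν (E p)) = (((r p.1 : ℝ) * ‖z p.1 p.2‖ : ℝ) : ℂ) := by
      intro p _
      rw [_root_.map_smul, smul_eq_mul, hd]
      have : ((r p.1 : ℝ) : ℂ) * c p.1 p.2 * z p.1 p.2
          = ((r p.1 : ℝ) : ℂ) * (c p.1 p.2 * z p.1 p.2) := by ring
      rw [show x' (ν (E p)) = z p.1 p.2 from rfl, this, hcz p.1 p.2]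
      push_cast
      ring
    have hxval : x' (simpleIntegral ν φ)
        = ((∑ p ∈ T, (r p.1 : ℝ) * ‖z p.1 p.2‖ : ℝ) : ℂ) := by
      rw [hint, map_sum, Finset.sum_congr rfl hterm2]
      push_cast
      rfl
    have hw0 : (0:ℝ) ≤ ∑ p ∈ T, (r p.1 : ℝ) * ‖z p.1 p.2‖ :=
      Finset.sum_nonneg fun p _ => mul_nonneg (r p.1).coe_nonneg (norm_nonneg _)
    have hkey : ∑ p ∈ T, (r p.1 : ℝ≥0∞) * (‖z p.1 p.2‖₊ : ℝ≥0∞)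
        = (‖x' (simpleIntegral ν φ)‖₊ : ℝ≥0∞) := by
      rw [← show ENNReal.ofReal ‖x' (simpleIntegral ν φ)‖ = (‖x' (simpleIntegral ν φ)‖₊ : ℝ≥0∞) from ofReal_norm _, hxval, Complex.norm_real, Real.norm_eq_abs,
        abs_of_nonneg hw0, ENNReal.ofReal_sum_of_nonneg
          (fun p _ => mul_nonneg (r p.1).coe_nonneg (norm_nonneg _))]
      refine Finset.sum_congr rfl fun p _ => ?_
      rw [ENNReal.ofReal_mul (r p.1).coe_nonneg, ENNReal.ofReal_coe_nnreal,
        show ENNReal.ofReal ‖z p.1 p.2‖ = (‖z p.1 p.2‖₊ : ℝ≥0∞) from ofReal_norm _]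
    -- put everything together
    have hsum_eq : ∑ a ∈ s.range, v a
        = ∑ p ∈ T, (r p.1 : ℝ≥0∞) * (‖z p.1 p.2‖₊ : ℝ≥0∞) := by
      rw [hT, Finset.sum_sigma]
      refine Finset.sum_congr rfl fun a ha => ?_
      rw [hveq a ha, Finset.mul_sum]
    have final : b < tSup ν g := calc
      b < ∑ a ∈ s.range, v a := hbv
      _ = (‖x' (simpleIntegral ν φ)‖₊ : ℝ≥0∞) := by rw [hsum_eq, hkey]
      _ ≤ (‖simpleIntegral ν φ‖₊ : ℝ≥0∞) := by
          have h1 : ‖x'‖₊ ≤ 1 := by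
            rw [← NNReal.coe_le_coe]
            simpa using hx1
          have h2 : ‖x' (simpleIntegral ν φ)‖₊ ≤ ‖simpleIntegral ν φ‖₊ :=
            le_trans (x'.le_opNNNorm (simpleIntegral ν φ))
              (by simpa using mul_le_mul' h1 (le_refl ‖simpleIntegral ν φ‖₊))
          exact_mod_cast h2
      _ ≤ tSup ν g := le_iSup₂_of_le φ hbound le_rfl
    exact final.le
  by_contra hcon
  push_neg at hcon
  obtain ⟨b, hb1, hb2⟩ := exists_between hcon
  exact absurd (main b hb2) (not_le.mpr hb1)


theorem tSup_comp (ν : VectorMeasure G X) (h : G ≃ₜ G) (hinv : NormIntegralInvariant ν h)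
    (g : G → ℝ≥0∞) : tSup ν (fun t => g (h.symm t)) = tSup ν g := by
  refine le_antisymm ?_ ?_
  · refine iSup₂_le fun φ hφ => ?_
    set ψ := φ.comp ⇑h h.continuous.measurable with hψ
    have hcomp : ψ.comp ⇑h.symm h.symm.continuous.measurable = φ := by
      refine SimpleFunc.ext fun t => ?_
      simp [hψ, SimpleFunc.coe_comp]
    have hnorm : ‖simpleIntegral ν φ‖ = ‖simpleIntegral ν ψ‖ := by
      have := hinv ψ
      rwa [hcomp] at this
    have hbound : ∀ t, (‖ψ t‖₊ : ℝ≥0∞) ≤ g t := by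
      intro t
      have : ψ t = φ (h t) := rfl
      rw [this]
      have := hφ (h t)
      simpa using this
    have : (‖simpleIntegral ν φ‖₊ : ℝ≥0∞) = (‖simpleIntegral ν ψ‖₊ : ℝ≥0∞) := by
      rw [← norm_toNNReal, hnorm, norm_toNNReal]
    rw [this]
    exact le_iSup₂_of_le ψ hbound le_rfl
  · refine iSup₂_le fun ψ hψ => ?_
    set φ := ψ.comp ⇑h.symm h.symm.continuous.measurable with hφ
    have hnorm : ‖simpleIntegral ν φ‖ = ‖simpleIntegral ν ψ‖ := hinv ψ
    have hbound : ∀ t, (‖φ t‖₊ : ℝ≥0∞) ≤ g (h.symm t) := fun t => hψ (h.symm t)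
    have : (‖simpleIntegral ν ψ‖₊ : ℝ≥0∞) = (‖simpleIntegral ν φ‖₊ : ℝ≥0∞) := by
      rw [← norm_toNNReal, ← hnorm, norm_toNNReal]
    rw [this]
    exact le_iSup₂_of_le φ hbound le_rfl

theorem wSup_comp (ν : VectorMeasure G X) (h : G ≃ₜ G) (hinv : NormIntegralInvariant ν h)
    (vvar : (X →L[ℂ] ℂ) → Measure G)
    (hvar : ∀ x', IsVariationOf (pairVM ν x') (vvar x'))
    (g : G → ℝ≥0∞) (hg : ∀ t, g t ≠ ⊤) :
    wSup vvar (fun t => g (h.symm t)) = wSup vvar g := by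
  have e : ∀ (g' : G → ℝ≥0∞), (∀ t, g' t ≠ ⊤) → wSup vvar g' = tSup ν g' := fun g' hg' =>
    le_antisymm (wSup_le_tSup ν vvar hvar g' hg') (tSup_le_wSup ν vvar hvar g')
  rw [e _ (fun t => hg (h.symm t)), e g hg, tSup_comp ν h hinv g]



theorem weakNorm_eq_sInf (vvar : (X →L[ℂ] ℂ) → Measure G) (Φ : ℝ → ℝ)
    (hΦmono : MonotoneOn Φ (Set.Ici 0)) (f : G → ℂ) :
    weakNorm vvar Φ f = sInf {k : ℝ≥0∞ | ∃ r : ℝ, 0 < r ∧ k = ENNReal.ofReal r ∧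
      ∀ x' : X →L[ℂ] ℂ, ‖x'‖ ≤ 1 →
        ∫⁻ t, ENNReal.ofReal (Φ (‖f t‖ / r)) ∂(vvar x') ≤ 1} := by
  refine le_antisymm ?_ ?_
  · refine le_sInf fun k hk => ?_
    obtain ⟨r, hr, rfl, hall⟩ := hk
    exact iSup₂_le fun x' hx' => sInf_le ⟨r, hr, rfl, hall x' hx'⟩
  · set L := weakNorm vvar Φ f with hL
    by_cases hLtop : L = ⊤
    · rw [hLtop]
      exact le_top
    have key : ∀ r : ℝ, 0 < r → L < ENNReal.ofReal r →
        ∀ x' : X →L[ℂ] ℂ, ‖x'‖ ≤ 1 →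
          ∫⁻ t, ENNReal.ofReal (Φ (‖f t‖ / r)) ∂(vvar x') ≤ 1 := by
      intro r hr hLr x' hx'
      have hlux : luxNorm Φ (vvar x') f < ENNReal.ofReal r :=
        lt_of_le_of_lt (le_iSup₂_of_le x' hx' le_rfl) hLr
      rw [luxNorm] at hlux
      obtain ⟨k, hkS, hk⟩ := sInf_lt_iff.mp hlux
      obtain ⟨r', hr', rfl, hint⟩ := hkS
      have hr'r : r' < r := (ENNReal.ofReal_lt_ofReal_iff hr).mp hk
      refine le_trans (lintegral_mono fun t => ENNReal.ofReal_le_ofReal ?_) hint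
      refine hΦmono (Set.mem_Ici.mpr (div_nonneg (norm_nonneg _) hr.le))
        (Set.mem_Ici.mpr (div_nonneg (norm_nonneg _) hr'.le)) ?_
      exact div_le_div_of_nonneg_left (norm_nonneg _) hr' hr'r.le
    refine ENNReal.le_of_forall_pos_le_add fun ε hε _ => ?_
    set r : ℝ := L.toReal + (ε : ℝ) with hrdef
    have hr : 0 < r := add_pos_of_nonneg_of_pos ENNReal.toReal_nonneg (by exact_mod_cast hε)
    have hofr : ENNReal.ofReal r = L + (ε : ℝ≥0∞) := by
      rw [hrdef, ENNReal.ofReal_add ENNReal.toReal_nonneg (by positivity),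
        ENNReal.ofReal_toReal hLtop, ENNReal.ofReal_coe_nnreal]
    have hLr : L < ENNReal.ofReal r := by
      rw [hofr]
      exact ENNReal.lt_add_right hLtop (by exact_mod_cast hε.ne')
    refine le_trans (sInf_le ⟨r, hr, rfl, key r hr hLr⟩) hofr.le


/-- If `ν` is norm integral `h`-invariant then `f_h = f ∘ h⁻¹` belongs to `L^Φ_w(ν)` whenever
`f` does, with equal weak Orlicz norms. -/
theorem weakNorm_comp_homeomorph (ν : VectorMeasure G X) (h : G ≃ₜ G)
    (hinv : NormIntegralInvariant ν h) (Φ : ℝ → ℝ) (hΦ : IsYoung Φ)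
    (vvar : (X →L[ℂ] ℂ) → Measure G)
    (hvar : ∀ x', IsVariationOf (pairVM ν x') (vvar x'))
    (f : G → ℂ) (hf : Measurable f) (hfin : weakNorm vvar Φ f < ⊤) :
    Measurable (f ∘ ⇑h.symm) ∧ weakNorm vvar Φ (f ∘ ⇑h.symm) = weakNorm vvar Φ f := by
  classical
  refine ⟨hf.comp h.symm.continuous.measurable, ?_⟩
  have hmono : MonotoneOn Φ (Set.Ici 0) := hΦ.1.monotoneOn
  rw [weakNorm_eq_sInf vvar Φ hmono (f ∘ ⇑h.symm), weakNorm_eq_sInf vvar Φ hmono f]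
  refine congrArg sInf ?_
  ext k
  simp only [Set.mem_setOf_eq]
  constructor
  · rintro ⟨r, hr, rfl, hall⟩
    refine ⟨r, hr, rfl, fun x' hx' => ?_⟩
    set gr : G → ℝ≥0∞ := fun t => ENNReal.ofReal (Φ (‖f t‖ / r)) with hgr
    have hws : wSup vvar (fun t => gr (h.symm t)) ≤ 1 :=
      iSup₂_le fun y hy => hall y hy
    have hws' : wSup vvar gr ≤ 1 := by
      rw [← wSup_comp ν h hinv vvar hvar gr (fun t => ENNReal.ofReal_ne_top)]
      exact hws
    exact le_trans (le_iSup₂_of_le x' hx' le_rfl) hws'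
  · rintro ⟨r, hr, rfl, hall⟩
    refine ⟨r, hr, rfl, fun x' hx' => ?_⟩
    set gr : G → ℝ≥0∞ := fun t => ENNReal.ofReal (Φ (‖f t‖ / r)) with hgr
    have hws : wSup vvar gr ≤ 1 := iSup₂_le fun y hy => hall y hy
    have hws' : wSup vvar (fun t => gr (h.symm t)) ≤ 1 := by
      rw [wSup_comp ν h hinv vvar hvar gr (fun t => ENNReal.ofReal_ne_top)]
      exact hws
    exact le_trans (le_iSup₂_of_le x' hx' le_rfl) hws'

end
end

section
/- Let ν be a vector measure on a compact group G that is absolutely continuous with respect to the Haar measure m_G, and let Φ be a Young function. Then the continuous functions C(G) are dense in the Orlicz space L^Φ(ν) with respect to the norm ‖·‖_{ν,Φ}. -/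
open MeasureTheory Filter Topology
open scoped ENNReal NNReal

noncomputable section

variable {G : Type*} [Group G] [TopologicalSpace G] [IsTopologicalGroup G]
  [CompactSpace G] [MeasurableSpace G] [BorelSpace G]
variable {X : Type*} [NormedAddCommGroup X] [NormedSpace ℂ X] [CompleteSpace X]

/-! ### Auxiliary lemmas -/

private lemma sum_abs_le_two {n : ℕ} (a : Fin n → ℝ) (η : ℝ)
    (h : ∀ S : Finset (Fin n), |∑ i ∈ S, a i| ≤ η) :
    ∑ i, |a i| ≤ 2 * η := by
  classical
  rw [← Finset.sum_filter_add_sum_filter_not Finset.univ (fun i => 0 ≤ a i)]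
  have h1 : ∑ i ∈ Finset.univ.filter (fun i => 0 ≤ a i), |a i|
      = ∑ i ∈ Finset.univ.filter (fun i => 0 ≤ a i), a i :=
    Finset.sum_congr rfl fun i hi => abs_of_nonneg (Finset.mem_filter.mp hi).2
  have h2 : ∑ i ∈ Finset.univ.filter (fun i => ¬ 0 ≤ a i), |a i|
      = -∑ i ∈ Finset.univ.filter (fun i => ¬ 0 ≤ a i), a i := by
    rw [← Finset.sum_neg_distrib]
    exact Finset.sum_congr rfl fun i hi =>
      abs_of_neg (lt_of_not_ge (Finset.mem_filter.mp hi).2)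
  have hA := abs_le.mp (h (Finset.univ.filter (fun i => 0 ≤ a i)))
  have hB := abs_le.mp (h (Finset.univ.filter (fun i => ¬ 0 ≤ a i)))
  rw [h1, h2]
  linarith [hA.2, hB.1]

private lemma sum_norm_le_four {n : ℕ} (z : Fin n → ℂ) (η : ℝ)
    (h : ∀ S : Finset (Fin n), ‖∑ i ∈ S, z i‖ ≤ η) :
    ∑ i, ‖z i‖ ≤ 4 * η := by
  have hre : ∑ i, |(z i).re| ≤ 2 * η := by
    refine sum_abs_le_two _ _ fun S => ?_
    calc |∑ i ∈ S, (z i).re| = |(∑ i ∈ S, z i).re| := by rw [Complex.re_sum]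
      _ ≤ ‖∑ i ∈ S, z i‖ := Complex.abs_re_le_norm _
      _ ≤ η := h S
  have him : ∑ i, |(z i).im| ≤ 2 * η := by
    refine sum_abs_le_two _ _ fun S => ?_
    calc |∑ i ∈ S, (z i).im| = |(∑ i ∈ S, z i).im| := by rw [Complex.im_sum]
      _ ≤ ‖∑ i ∈ S, z i‖ := Complex.abs_im_le_norm _
      _ ≤ η := h S
  calc ∑ i, ‖z i‖ ≤ ∑ i, (|(z i).re| + |(z i).im|) :=
      Finset.sum_le_sum fun i _ => by
        exact Complex.norm_le_abs_re_add_abs_im _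
    _ = ∑ i, |(z i).re| + ∑ i, |(z i).im| := Finset.sum_add_distrib
    _ ≤ 2 * η + 2 * η := add_le_add hre him
    _ = 4 * η := by ring

private lemma vm_biUnion (ν : VectorMeasure G X) {n : ℕ} {B : Fin n → Set G}
    (hB : ∀ i, MeasurableSet (B i)) (hd : Pairwise (Function.onFun Disjoint B))
    (S : Finset (Fin n)) :
    ν (⋃ i ∈ S, B i) = ∑ i ∈ S, ν (B i) := by
  classical
  induction S using Finset.induction_on with
  | empty => simp
  | insert a S ha ih =>
    have hdis : Disjoint (B a) (⋃ i ∈ S, B i) := by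
      simp only [Set.disjoint_iUnion_right]
      exact fun i hi => hd (show a ≠ i from fun h => ha (by rw [h]; exact hi))
    rw [Finset.set_biUnion_insert, VectorMeasure.of_union hdis (hB a)
        (S.measurableSet_biUnion (fun i _ => hB i)), ih, Finset.sum_insert ha]

private lemma vvar_le (ν : VectorMeasure G X) (vvar : (X →L[ℂ] ℂ) → Measure G)
    (hvar : ∀ x', IsVariationOf (pairVM ν x') (vvar x'))
    {x' : X →L[ℂ] ℂ} (hx' : ‖x'‖ ≤ 1) {E : Set G} (hE : MeasurableSet E)
    {η : ℝ} (hν : ∀ B, MeasurableSet B → B ⊆ E → ‖ν B‖ ≤ η) :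
    vvar x' E ≤ ENNReal.ofReal (4 * η) := by
  rw [hvar x' E hE]
  refine iSup_le fun n => iSup_le fun B => iSup_le fun h1 => iSup_le fun h2 => ?_
  have key : ∀ S : Finset (Fin n), ‖∑ i ∈ S, pairVM ν x' (B i)‖ ≤ η := by
    intro S
    have he : x' (ν (⋃ i ∈ S, B i)) = ∑ i ∈ S, pairVM ν x' (B i) := by
      rw [vm_biUnion ν (fun i => (h1 i).1) h2 S, map_sum]; rfl
    rw [← he]
    calc ‖x' (ν (⋃ i ∈ S, B i))‖ ≤ ‖x'‖ * ‖ν (⋃ i ∈ S, B i)‖ := x'.le_opNorm _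
      _ ≤ 1 * η := mul_le_mul hx'
          (hν _ (S.measurableSet_biUnion fun i _ => (h1 i).1)
            (Set.iUnion₂_subset fun i _ => (h1 i).2)) (norm_nonneg _) zero_le_one
      _ = η := one_mul η
  have hsum := sum_norm_le_four (fun i => pairVM ν x' (B i)) η key
  calc ∑ i, (‖pairVM ν x' (B i)‖₊ : ℝ≥0∞)
      = ENNReal.ofReal (∑ i, ‖pairVM ν x' (B i)‖) := by
        rw [ENNReal.ofReal_sum_of_nonneg (fun i _ => norm_nonneg _)]
        exact Finset.sum_congr rfl fun i _ => (ofReal_norm_eq_enorm _).symm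
    _ ≤ ENNReal.ofReal (4 * η) := ENNReal.ofReal_le_ofReal hsum

private lemma meas_ofReal_comp {Φ : ℝ → ℝ} (hc : ContinuousOn Φ (Set.Ici 0))
    {h : G → ℝ} (hh : Measurable h) (hnn : ∀ t, 0 ≤ h t) :
    Measurable fun t => ENNReal.ofReal (Φ (h t)) := by
  have h1 : Continuous ((Set.Ici (0:ℝ)).restrict Φ) :=
    continuousOn_iff_continuous_restrict.mp hc
  have h2 : Measurable fun t => Φ (h t) := by
    have : Measurable fun t => (Set.Ici (0:ℝ)).restrict Φ ⟨h t, hnn t⟩ :=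
      h1.measurable.comp (hh.subtype_mk)
    exact this
  exact ENNReal.measurable_ofReal.comp h2

private lemma lux_add (Φ : ℝ → ℝ) (hΦ : IsYoung Φ) (m : Measure G)
    (u v : G → ℂ) (hu : Measurable u) (hv : Measurable v)
    {rb : ℝ} (hrb : 0 < rb)
    (hvb : ∫⁻ t, ENNReal.ofReal (Φ (‖v t‖ / rb)) ∂m ≤ 1) :
    luxNorm Φ m (fun t => u t + v t) ≤ luxNorm Φ m u + ENNReal.ofReal rb := by
  obtain ⟨hmono, hconv, hcont, hzero, -⟩ := hΦ
  have hΦ0 : Φ 0 = 0 := (hzero 0 le_rfl).mpr rfl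
  have hΦnn : ∀ s : ℝ, 0 ≤ s → 0 ≤ Φ s := fun s hs => by
    rw [← hΦ0]; exact hmono.monotoneOn Set.self_mem_Ici hs hs
  have hsplit : luxNorm Φ m u + ENNReal.ofReal rb
      = ⨅ b ∈ {k : ℝ≥0∞ | ∃ r : ℝ, 0 < r ∧ k = ENNReal.ofReal r ∧
          ∫⁻ t, ENNReal.ofReal (Φ (‖u t‖ / r)) ∂m ≤ 1}, b + ENNReal.ofReal rb :=
    ENNReal.sInf_add
  rw [hsplit]
  refine le_iInf₂ fun b hb => ?_
  obtain ⟨ra, hra, rfl, hua⟩ := hb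
  rw [← ENNReal.ofReal_add hra.le hrb.le]
  have hab : (0:ℝ) < ra + rb := by linarith
  set lam : ℝ := ra / (ra + rb) with hlam
  have hlam0 : 0 ≤ lam := by positivity
  have hlam1 : lam ≤ 1 := by rw [hlam, div_le_one hab]; linarith
  have hkey : ∀ t : G, ENNReal.ofReal (Φ (‖u t + v t‖ / (ra + rb)))
      ≤ ENNReal.ofReal lam * ENNReal.ofReal (Φ (‖u t‖ / ra))
        + ENNReal.ofReal (1 - lam) * ENNReal.ofReal (Φ (‖v t‖ / rb)) := by
    intro t
    have hA : (0:ℝ) ≤ ‖u t‖ / ra := div_nonneg (norm_nonneg _) hra.le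
    have hB : (0:ℝ) ≤ ‖v t‖ / rb := div_nonneg (norm_nonneg _) hrb.le
    have e1 : lam * (‖u t‖ / ra) = ‖u t‖ / (ra + rb) := by
      rw [hlam]; field_simp [hra.ne', hab.ne']
    have e2 : (1 - lam) * (‖v t‖ / rb) = ‖v t‖ / (ra + rb) := by
      have h1l : (1:ℝ) - lam = rb / (ra + rb) := by
        rw [hlam]; field_simp; ring
      rw [h1l]; field_simp [hrb.ne', hab.ne']
    have h1 : ‖u t + v t‖ / (ra + rb) ≤ lam * (‖u t‖ / ra) + (1 - lam) * (‖v t‖ / rb) := by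
      rw [e1, e2, ← add_div]
      gcongr
      exact norm_add_le _ _
    have hconvineq : Φ (‖u t + v t‖ / (ra + rb))
        ≤ lam * Φ (‖u t‖ / ra) + (1 - lam) * Φ (‖v t‖ / rb) := by
      calc Φ (‖u t + v t‖ / (ra + rb))
          ≤ Φ (lam * (‖u t‖ / ra) + (1 - lam) * (‖v t‖ / rb)) :=
            hmono.monotoneOn (Set.mem_Ici.mpr (div_nonneg (norm_nonneg _) hab.le))
              (Set.mem_Ici.mpr (add_nonneg (mul_nonneg hlam0 hA)
                (mul_nonneg (by linarith) hB))) h1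
        _ ≤ lam * Φ (‖u t‖ / ra) + (1 - lam) * Φ (‖v t‖ / rb) := by
            have := hconv.2 (Set.mem_Ici.mpr hA) (Set.mem_Ici.mpr hB) hlam0
              (show (0:ℝ) ≤ 1 - lam by linarith) (by ring)
            simpa [smul_eq_mul] using this
    calc ENNReal.ofReal (Φ (‖u t + v t‖ / (ra + rb)))
        ≤ ENNReal.ofReal (lam * Φ (‖u t‖ / ra) + (1 - lam) * Φ (‖v t‖ / rb)) :=
          ENNReal.ofReal_le_ofReal hconvineq
      _ = ENNReal.ofReal (lam * Φ (‖u t‖ / ra)) + ENNReal.ofReal ((1 - lam) * Φ (‖v t‖ / rb)) :=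
          ENNReal.ofReal_add (mul_nonneg hlam0 (hΦnn _ hA)) (mul_nonneg (by linarith) (hΦnn _ hB))
      _ = ENNReal.ofReal lam * ENNReal.ofReal (Φ (‖u t‖ / ra))
          + ENNReal.ofReal (1 - lam) * ENNReal.ofReal (Φ (‖v t‖ / rb)) := by
          rw [ENNReal.ofReal_mul hlam0, ENNReal.ofReal_mul (by linarith)]
  have hFu : Measurable fun t => ENNReal.ofReal (Φ (‖u t‖ / ra)) :=
    meas_ofReal_comp hcont (hu.norm.div_const ra)
      (fun t => div_nonneg (norm_nonneg _) hra.le)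
  have hFv : Measurable fun t => ENNReal.ofReal (Φ (‖v t‖ / rb)) :=
    meas_ofReal_comp hcont (hv.norm.div_const rb)
      (fun t => div_nonneg (norm_nonneg _) hrb.le)
  refine sInf_le ⟨ra + rb, by positivity, rfl, ?_⟩
  calc ∫⁻ t, ENNReal.ofReal (Φ (‖u t + v t‖ / (ra + rb))) ∂m
      ≤ ∫⁻ t, (ENNReal.ofReal lam * ENNReal.ofReal (Φ (‖u t‖ / ra))
          + ENNReal.ofReal (1 - lam) * ENNReal.ofReal (Φ (‖v t‖ / rb))) ∂m :=
        lintegral_mono hkey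
    _ = ENNReal.ofReal lam * ∫⁻ t, ENNReal.ofReal (Φ (‖u t‖ / ra)) ∂m
        + ENNReal.ofReal (1 - lam) * ∫⁻ t, ENNReal.ofReal (Φ (‖v t‖ / rb)) ∂m := by
        rw [lintegral_add_left (hFu.const_mul _), lintegral_const_mul _ hFu,
          lintegral_const_mul _ hFv]
    _ ≤ ENNReal.ofReal lam * 1 + ENNReal.ofReal (1 - lam) * 1 := by gcongr
    _ = 1 := by
        rw [mul_one, mul_one, ← ENNReal.ofReal_add hlam0 (by linarith),
          show lam + (1 - lam) = 1 by ring, ENNReal.ofReal_one]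

private lemma simple_approx (mG : Measure G) [mG.IsHaarMeasure] [IsProbabilityMeasure mG]
    (φ : SimpleFunc G ℂ) :
    ∃ C : ℝ, 0 ≤ C ∧ ∀ δ : ℝ, 0 < δ → ∃ g : C(G, ℂ), ∃ E : Set G,
      MeasurableSet E ∧ mG E < ENNReal.ofReal δ ∧ (∀ t, t ∉ E → (φ : G → ℂ) t = g t) ∧
      ∀ t, ‖(φ : G → ℂ) t - g t‖ ≤ C := by
  classical
  refine SimpleFunc.induction (fun c {s} hs => ?_) (fun φ₁ φ₂ _ h1 h2 => ?_) φ
  · -- indicator case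
    refine ⟨2 * ‖c‖, by positivity, fun δ hδ => ?_⟩
    have hδ2 : (ENNReal.ofReal (δ/2)) ≠ 0 := by
      simp only [ne_eq, ENNReal.ofReal_eq_zero, not_le]; linarith
    obtain ⟨U, hsU, hUopen, -, hU⟩ := hs.exists_isOpen_diff_lt (measure_ne_top mG s) hδ2
    obtain ⟨K, hKs, hKcomp, -, hK⟩ :=
      hs.exists_isCompact_isClosed_diff_lt (μ := mG) (measure_ne_top mG s) hδ2
    have hdisj : Disjoint K Uᶜ :=
      Set.disjoint_left.mpr fun x hxK hxUc => hxUc (hsU (hKs hxK))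
    obtain ⟨w, hw0, hw1, hw01⟩ :=
      exists_continuous_zero_one_of_isCompact hKcomp hUopen.isClosed_compl hdisj
    set g : C(G, ℂ) := ⟨fun t => ((1 - w t : ℝ) : ℂ) * c,
      (Complex.continuous_ofReal.comp (continuous_const.sub w.continuous)).mul
        continuous_const⟩ with hg
    set ψ : SimpleFunc G ℂ :=
      SimpleFunc.piecewise s hs (SimpleFunc.const G c) (SimpleFunc.const G 0) with hψ
    have hψval : ∀ t, (ψ : G → ℂ) t = if t ∈ s then c else 0 := by
      intro t
      simp only [hψ, SimpleFunc.coe_piecewise, SimpleFunc.coe_const]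
      by_cases ht : t ∈ s
      · rw [Set.piecewise_eq_of_mem _ _ _ ht]; simp [ht]
      · rw [Set.piecewise_eq_of_notMem _ _ _ ht]; simp [ht]
    set E : Set G := {t | (ψ : G → ℂ) t ≠ g t} with hE
    have hEmeas : MeasurableSet E := by
      have h := (measurableSet_eq_fun (ψ.measurable) (g.continuous.measurable)).compl
      rw [Set.compl_setOf] at h
      exact h
    refine ⟨g, E, hEmeas, ?_, fun t ht => not_not.mp ht, fun t => ?_⟩
    · -- measure bound
      have hEsub : E ⊆ (U \ s) ∪ (s \ K) := by
        intro t ht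
        have htne : (ψ : G → ℂ) t ≠ g t := ht
        by_cases htK : t ∈ K
        · exfalso
          apply htne
          rw [hψval t, if_pos (hKs htK), hg]
          simp [hw0 htK]
        · by_cases htU : t ∈ U
          · by_cases hts : t ∈ s
            · exact Or.inr ⟨hts, htK⟩
            · exact Or.inl ⟨htU, hts⟩
          · exfalso
            apply htne
            have hts : t ∉ s := fun h => htU (hsU h)
            rw [hψval t, if_neg hts, hg]
            simp [hw1 (Set.mem_compl htU)]
      calc mG E ≤ mG ((U \ s) ∪ (s \ K)) := measure_mono hEsub
        _ ≤ mG (U \ s) + mG (s \ K) := measure_union_le _ _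
        _ < ENNReal.ofReal (δ/2) + ENNReal.ofReal (δ/2) := ENNReal.add_lt_add hU hK
        _ = ENNReal.ofReal δ := by
            rw [← ENNReal.ofReal_add (by linarith) (by linarith)]; norm_num
    · -- norm bound
      have hψb : ‖(ψ : G → ℂ) t‖ ≤ ‖c‖ := by
        rw [hψval t]; split <;> simp [norm_nonneg]
      have hgb : ‖g t‖ ≤ ‖c‖ := by
        rw [hg]
        simp only [ContinuousMap.coe_mk]
        rw [norm_mul, Complex.norm_real]
        have h01 := hw01 t
        have : |1 - w t| ≤ 1 := by
          rw [abs_le]; constructor <;> [linarith [h01.2]; linarith [h01.1]]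
        calc |1 - w t| * ‖c‖ ≤ 1 * ‖c‖ :=
            mul_le_mul_of_nonneg_right this (norm_nonneg _)
          _ = ‖c‖ := one_mul _
      calc ‖(ψ : G → ℂ) t - g t‖ ≤ ‖(ψ : G → ℂ) t‖ + ‖g t‖ := norm_sub_le _ _
        _ ≤ ‖c‖ + ‖c‖ := add_le_add hψb hgb
        _ = 2 * ‖c‖ := by ring
  · -- additive case
    obtain ⟨C₁, hC₁, h1'⟩ := h1
    obtain ⟨C₂, hC₂, h2'⟩ := h2
    refine ⟨C₁ + C₂, by linarith, fun δ hδ => ?_⟩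
    obtain ⟨g₁, E₁, hE₁m, hE₁, hg₁, hb₁⟩ := h1' (δ/2) (by linarith)
    obtain ⟨g₂, E₂, hE₂m, hE₂, hg₂, hb₂⟩ := h2' (δ/2) (by linarith)
    refine ⟨g₁ + g₂, E₁ ∪ E₂, hE₁m.union hE₂m, ?_, ?_, ?_⟩
    · calc mG (E₁ ∪ E₂) ≤ mG E₁ + mG E₂ := measure_union_le _ _
        _ < ENNReal.ofReal (δ/2) + ENNReal.ofReal (δ/2) := ENNReal.add_lt_add hE₁ hE₂
        _ = ENNReal.ofReal δ := by
            rw [← ENNReal.ofReal_add (by linarith) (by linarith)]; norm_num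
    · intro t ht
      simp only [SimpleFunc.coe_add, Pi.add_apply, ContinuousMap.add_apply]
      rw [hg₁ t (fun h => ht (Set.mem_union_left _ h)),
        hg₂ t (fun h => ht (Set.mem_union_right _ h))]
    · intro t
      calc ‖(↑(φ₁ + φ₂) : G → ℂ) t - (g₁ + g₂) t‖
          = ‖((φ₁ : G → ℂ) t - g₁ t) + ((φ₂ : G → ℂ) t - g₂ t)‖ := by
            simp only [SimpleFunc.coe_add, Pi.add_apply, ContinuousMap.add_apply]
            ring_nf
        _ ≤ ‖(φ₁ : G → ℂ) t - g₁ t‖ + ‖(φ₂ : G → ℂ) t - g₂ t‖ := norm_add_le _ _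
        _ ≤ C₁ + C₂ := add_le_add (hb₁ t) (hb₂ t)

/-- If `ν ≪ m_G` then the continuous functions are dense in `L^Φ(ν)`. -/
theorem continuous_dense_in_LPhi (mG : Measure G) [mG.IsHaarMeasure] [IsProbabilityMeasure mG]
    (ν : VectorMeasure G X) (hac : VMAbsCont ν mG)
    (Φ : ℝ → ℝ) (hΦ : IsYoung Φ)
    (vvar : (X →L[ℂ] ℂ) → Measure G)
    (hvar : ∀ x', IsVariationOf (pairVM ν x') (vvar x'))
    (f : G → ℂ) (hmem : MemLPhi vvar Φ f) (ε : ℝ≥0∞) (hε : 0 < ε) :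
    ∃ g : C(G, ℂ), weakNorm vvar Φ (fun t => f t - g t) < ε := by
  obtain ⟨hmono, hconv, hcont, hzero, -⟩ := id hΦ
  have hΦ0 : Φ 0 = 0 := (hzero 0 le_rfl).mpr rfl
  have hΦnn : ∀ s : ℝ, 0 ≤ s → 0 ≤ Φ s := fun s hs => by
    rw [← hΦ0]; exact hmono.monotoneOn Set.self_mem_Ici hs hs
  obtain ⟨hfmeas, happrox⟩ := hmem
  have hε2 : 0 < ε / 2 := ENNReal.half_pos hε.ne'
  obtain ⟨φ, hφ⟩ := happrox (ε / 2) hε2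
  obtain ⟨r0, hr00, hrlt⟩ := ENNReal.lt_iff_exists_nnreal_btwn.mp hε2
  set r : ℝ := (r0 : ℝ) with hrdef
  have hrpos : 0 < r := by exact_mod_cast ENNReal.coe_pos.mp hr00
  have hofr : ENNReal.ofReal r = (r0 : ℝ≥0∞) := ENNReal.ofReal_coe_nnreal
  obtain ⟨C, hC0, happ⟩ := simple_approx mG φ
  set a : ℝ := Φ (C / r) with hadef
  have ha0 : 0 ≤ a := hΦnn _ (div_nonneg hC0 hrpos.le)
  set η : ℝ := 1 / (4 * (a + 1)) with hηdef
  have hηpos : 0 < η := by positivity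
  have h4η : 4 * η = 1 / (a + 1) := by
    rw [hηdef]; field_simp
  have h41 : a * (4 * η) ≤ 1 := by
    rw [h4η, mul_one_div, div_le_one (by linarith)]
    linarith
  obtain ⟨δ, hδ0, hδ⟩ := hac η hηpos
  obtain ⟨g, E, hEmeas, hElt, hgφ, hbound⟩ := happ δ hδ0
  have key : ∀ x' : X →L[ℂ] ℂ, ‖x'‖ ≤ 1 →
      ∫⁻ t, ENNReal.ofReal (Φ (‖(φ : G → ℂ) t - g t‖ / r)) ∂(vvar x') ≤ 1 := by
    intro x' hx'
    have hν : ∀ B, MeasurableSet B → B ⊆ E → ‖ν B‖ ≤ η := fun B hB hBE =>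
      (hδ B hB (lt_of_le_of_lt (measure_mono hBE) hElt)).le
    have hvvE : vvar x' E ≤ ENNReal.ofReal (4 * η) := vvar_le ν vvar hvar hx' hEmeas hν
    have hpt : ∀ t, ENNReal.ofReal (Φ (‖(φ : G → ℂ) t - g t‖ / r))
        ≤ E.indicator (fun _ => ENNReal.ofReal a) t := by
      intro t
      by_cases ht : t ∈ E
      · rw [Set.indicator_of_mem ht]
        refine ENNReal.ofReal_le_ofReal ?_
        refine hmono.monotoneOn (Set.mem_Ici.mpr (div_nonneg (norm_nonneg _) hrpos.le))
          (Set.mem_Ici.mpr (div_nonneg hC0 hrpos.le)) ?_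
        gcongr
        exact hbound t
      · rw [Set.indicator_of_notMem ht, hgφ t ht]
        simp [hΦ0]
    calc ∫⁻ t, ENNReal.ofReal (Φ (‖(φ : G → ℂ) t - g t‖ / r)) ∂(vvar x')
        ≤ ∫⁻ t, E.indicator (fun _ => ENNReal.ofReal a) t ∂(vvar x') := lintegral_mono hpt
      _ = ENNReal.ofReal a * vvar x' E := lintegral_indicator_const hEmeas _
      _ ≤ ENNReal.ofReal a * ENNReal.ofReal (4 * η) := mul_le_mul_right hvvE _
      _ = ENNReal.ofReal (a * (4 * η)) := (ENNReal.ofReal_mul ha0).symm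
      _ ≤ 1 := by rw [← ENNReal.ofReal_one]; exact ENNReal.ofReal_le_ofReal h41
  have tri : ∀ x' : X →L[ℂ] ℂ, ‖x'‖ ≤ 1 →
      luxNorm Φ (vvar x') (fun t => f t - g t)
        ≤ luxNorm Φ (vvar x') (fun t => f t - (φ : G → ℂ) t) + ENNReal.ofReal r := by
    intro x' hx'
    have heq : (fun t => f t - g t)
        = fun t => (f t - (φ : G → ℂ) t) + ((φ : G → ℂ) t - g t) := by
      funext t; ring
    rw [heq]
    exact lux_add Φ hΦ (vvar x') _ _ (hfmeas.sub φ.measurable)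
      (φ.measurable.sub g.continuous.measurable) hrpos (key x' hx')
  refine ⟨g, ?_⟩
  have hW : weakNorm vvar Φ (fun t => f t - g t)
      ≤ weakNorm vvar Φ (fun t => f t - (φ : G → ℂ) t) + ENNReal.ofReal r := by
    show (⨆ (x' : X →L[ℂ] ℂ) (_ : ‖x'‖ ≤ 1),
        luxNorm Φ (vvar x') (fun t => f t - g t)) ≤ _
    refine iSup₂_le fun x' hx' => (tri x' hx').trans (add_le_add_left ?_ _)
    exact le_iSup₂ (f := fun (x' : X →L[ℂ] ℂ) (_ : ‖x'‖ ≤ 1) =>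
      luxNorm Φ (vvar x') (fun t => f t - (φ : G → ℂ) t)) x' hx'
  refine lt_of_le_of_lt hW ?_
  have hr2 : ENNReal.ofReal r < ε / 2 := by rw [hofr]; exact hrlt
  calc weakNorm vvar Φ (fun t => f t - (φ : G → ℂ) t) + ENNReal.ofReal r
      < ε / 2 + ε / 2 := ENNReal.add_lt_add hφ hr2
    _ = ε := ENNReal.add_halves ε

end
end
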